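/- Let A be a non-degenerate evolution algebra with natural basis B and structure matrix (ω_{ij}). Let T be a twin class relative to B and suppose there exists an index k such that D^1(k) ∩ T = {j} for some j ∈ T. Then every derivation d satisfies d_{jl} = d_{lj} = 0 for every l ∈ T \ {j}. -/

import Mathlib

/-!
Row `k` meets the twin class `T` only in `j`, and `ω_{kl} = 0`, so the identity
`∑ₘ ω_{km} d_{ml} = 2 ω_{kl} d_{kk} = 0` reduces to `ω_{kj} d_{jl} = 0` once the terms with
`m ∉ T` vanish; they do because derivations kill entries between different twin classes.
Then `d_{jl} = 0` forces `d_{lj} = 0` through the symmetric relation between `d_{jl}` and `d_{lj}`.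
-/

namespace EvolutionAlgebra

variable {K ι : Type*} [Ring K] [NoZeroDivisors K]

theorem derivation_apply_eq_zero_of_apply_swap_eq_zero (ω d : Matrix ι ι K)
    (hd1 : ∀ i j k : ι, i ≠ j → ω j k * d i j + ω i k * d j i = 0)
    {a b : ι} (hab : a ≠ b) (hb : ∃ q, ω b q ≠ 0) (hba : d b a = 0) : d a b = 0 := by
  obtain ⟨q, hbq⟩ := hb
  have h := hd1 a b q hab
  rw [hba, mul_zero, add_zero] at h
  exact (mul_eq_zero.mp h).resolve_left hbq

theorem derivation_apply_eq_zero_of_support_not_subset (ω d : Matrix ι ι K)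
    (hd1 : ∀ i j k : ι, i ≠ j → ω j k * d i j + ω i k * d j i = 0)
    {a b : ι} (hab : a ≠ b) {p : ι} (hbp : ω b p ≠ 0) (hap : ω a p = 0) : d a b = 0 := by
  have h := hd1 a b p hab
  rw [hap, zero_mul, add_zero] at h
  exact (mul_eq_zero.mp h).resolve_left hbp

theorem derivation_apply_eq_zero_of_support_ne (ω d : Matrix ι ι K)
    (hnd : ∀ i : ι, ∃ k, ω i k ≠ 0)
    (hd1 : ∀ i j k : ι, i ≠ j → ω j k * d i j + ω i k * d j i = 0)
    {a b : ι} (hsupp : {m | ω a m ≠ 0} ≠ {m | ω b m ≠ 0}) : d a b = 0 := by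
  have hab : a ≠ b := by rintro rfl; exact hsupp rfl
  by_cases hsub : {m | ω b m ≠ 0} ⊆ {m | ω a m ≠ 0}
  · obtain ⟨p, hap, hbp⟩ := Set.not_subset.mp fun h => hsupp (h.antisymm hsub)
    have hba := derivation_apply_eq_zero_of_support_not_subset ω d hd1 hab.symm hap
      (not_not.mp hbp)
    exact derivation_apply_eq_zero_of_apply_swap_eq_zero ω d hd1 hab (hnd b) hba
  · obtain ⟨p, hbp, hap⟩ := Set.not_subset.mp hsub
    exact derivation_apply_eq_zero_of_support_not_subset ω d hd1 hab hbp (not_not.mp hap)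

theorem derivation_apply_eq_zero_of_row_sum [Fintype ι] (ω d : Matrix ι ι K)
    {k j l : ι} (hd2 : ∑ m, ω k m * d m l = 2 * ω k l * d k k)
    (hkl : ω k l = 0) (hkj : ω k j ≠ 0) (hrow : ∀ m, m ≠ j → ω k m ≠ 0 → d m l = 0) :
    d j l = 0 := by
  have hsingle : ∑ m, ω k m * d m l = ω k j * d j l := by
    refine Finset.sum_eq_single j (fun m _ hmj => ?_) (fun h => absurd (Finset.mem_univ j) h)
    by_cases hkm : ω k m = 0
    · rw [hkm, zero_mul]
    · rw [hrow m hmj hkm, mul_zero]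
  rw [hsingle, hkl, mul_zero, zero_mul] at hd2
  exact (mul_eq_zero.mp hd2).resolve_left hkj

end EvolutionAlgebra

open EvolutionAlgebra in
theorem derivation_unique_intersection_general {K : Type*} [Field K] {n : ℕ}
    (ω d : Matrix (Fin n) (Fin n) K)
    (hnd : ∀ i : Fin n, ∃ k, ω i k ≠ 0)
    (hd1 : ∀ i j k : Fin n, i ≠ j → ω j k * d i j + ω i k * d j i = 0)
    (hd2 : ∀ i j : Fin n, ∑ k, ω i k * d k j = 2 * ω i j * d i i)
    (j : Fin n)
    (T : Set (Fin n)) (hT : T = {l | {m | ω l m ≠ 0} = {m | ω j m ≠ 0}})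
    (k : Fin n) (hk : {m | ω k m ≠ 0} ∩ T = {j}) :
    ∀ l ∈ T, l ≠ j → d j l = 0 ∧ d l j = 0 := by
  intro l hl hlj
  have hmemT : ∀ m, ω k m ≠ 0 → m ∈ T → m = j := fun m hkm hm =>
    (hk.subset ⟨hkm, hm⟩ : m ∈ ({j} : Set (Fin n)))
  have hkj : ω k j ≠ 0 := (hk.symm.subset rfl).1
  have hkl : ω k l = 0 := by_contra fun h => hlj (hmemT l h hl)
  have hrow : ∀ m, m ≠ j → ω k m ≠ 0 → d m l = 0 := by
    intro m hmj hkm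
    refine derivation_apply_eq_zero_of_support_ne ω d hnd hd1 fun hml => hmj (hmemT m hkm ?_)
    rw [hT] at hl ⊢
    exact hml.trans hl
  have hjl := derivation_apply_eq_zero_of_row_sum ω d (hd2 k l) hkl hkj hrow
  exact ⟨hjl, derivation_apply_eq_zero_of_apply_swap_eq_zero ω d hd1 hlj (hnd j) hjl⟩

/-- If `T` is a twin class and some index `k` satisfies `D¹(k) ∩ T = {j}` for
some `j ∈ T`, then every derivation satisfies `d_{jl} = d_{lj} = 0` for every
`l ∈ T \ {j}`. -/
theorem derivation_unique_intersection {K : Type*} [Field K] {n : ℕ}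
    (ω d : Matrix (Fin n) (Fin n) K)
    (hnd : ∀ i : Fin n, ∃ k, ω i k ≠ 0)
    (hd1 : ∀ i j k : Fin n, i ≠ j → ω j k * d i j + ω i k * d j i = 0)
    (hd2 : ∀ i j : Fin n, ∑ k, ω i k * d k j = 2 * ω i j * d i i)
    (j : Fin n)
    (T : Set (Fin n)) (hT : T = {l | {m | ω l m ≠ 0} = {m | ω j m ≠ 0}})
    (hj : j ∈ T)
    (k : Fin n) (hk : {m | ω k m ≠ 0} ∩ T = {j}) :
    ∀ l ∈ T, l ≠ j → d j l = 0 ∧ d l j = 0 :=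
  derivation_unique_intersection_general ω d hnd hd1 hd2 j T hT k hk
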